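/- arXiv:math/0612026 — 7 statements merged into one kernel-verified Lean document; each statement's English description precedes it below -/
import Mathlib

section
/- Let 1 < α < θ and let Φ be a strictly convex differentiable nice Young function such that Φ(x)/x^α is non-decreasing and Φ(x)/x^θ is non-increasing on (0,∞). If there is Γ ≥ 0 with Γ·Φ(xy) ≥ Φ(x)·Φ(y) for all x,y ≥ 0, then there exists Γ₁ ≥ 0 such that Γ₁·Φ'(xy) ≥ Φ'(x)·Φ'(y) for all x,y ≥ 0 (one may take Γ₁ = θ²Γ/α). -/
open Real Set

/-
The growth conditions on `Φ(x)/x^α` and `Φ(x)/x^θ` say, after differentiating, that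
`α Φ(x) ≤ x Φ'(x) ≤ θ Φ(x)` for `x > 0`. Hence
`xy Φ'(x) Φ'(y) ≤ θ² Φ(x) Φ(y) ≤ θ² Γ Φ(xy) ≤ (θ² Γ / α) xy Φ'(xy)`, and one divides by `xy`;
the cases `x = 0` or `y = 0` are covered by `Φ'(0) = 0`.
-/

theorem hasDerivAt_div_rpow {f : ℝ → ℝ} {p x : ℝ} (hx : 0 < x) (hf : DifferentiableAt ℝ f x) :
    HasDerivAt (fun y => f y / y ^ p) ((x * deriv f x - p * f x) / x ^ (p + 1)) x := by
  refine (hf.hasDerivAt.div (hasDerivAt_rpow_const (p := p) (Or.inl hx.ne'))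
    (rpow_pos_of_pos hx p).ne').congr_deriv ?_
  rw [rpow_add hx, rpow_sub_one hx.ne', rpow_one]
  have := (rpow_pos_of_pos hx p).ne'
  field_simp

theorem mul_le_mul_deriv_of_monotoneOn_div_rpow {f : ℝ → ℝ} {p x : ℝ} (hx : 0 < x)
    (hf : DifferentiableAt ℝ f x) (hmono : MonotoneOn (fun y => f y / y ^ p) (Ioi 0)) :
    p * f x ≤ x * deriv f x := by
  have hnonneg := hmono.derivWithin_nonneg (x := x)
  rw [derivWithin_of_isOpen isOpen_Ioi hx, (hasDerivAt_div_rpow hx hf).deriv,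
    le_div_iff₀ (rpow_pos_of_pos hx _), zero_mul] at hnonneg
  linarith

theorem mul_deriv_le_mul_of_antitoneOn_div_rpow {f : ℝ → ℝ} {p x : ℝ} (hx : 0 < x)
    (hf : DifferentiableAt ℝ f x) (hanti : AntitoneOn (fun y => f y / y ^ p) (Ioi 0)) :
    x * deriv f x ≤ p * f x := by
  have hnonpos := hanti.derivWithin_nonpos (x := x)
  rw [derivWithin_of_isOpen isOpen_Ioi hx, (hasDerivAt_div_rpow hx hf).deriv,
    div_le_iff₀ (rpow_pos_of_pos hx _), zero_mul] at hnonpos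
  linarith

theorem stmt4_general (Φ : ℝ → ℝ) (α θ Γ : ℝ) (hα : 1 < α) (hΓ : 0 ≤ Γ)
    (hdiff : Differentiable ℝ Φ)
    (hnonneg : ∀ x, 0 ≤ Φ x)
    (hd0 : deriv Φ 0 = 0)
    (hmono : MonotoneOn (fun x => Φ x / x ^ α) (Set.Ioi 0))
    (hanti : AntitoneOn (fun x => Φ x / x ^ θ) (Set.Ioi 0))
    (hsub : ∀ x ≥ (0:ℝ), ∀ y ≥ (0:ℝ), Φ x * Φ y ≤ Γ * Φ (x * y)) :
    ∃ Γ₁ : ℝ, 0 ≤ Γ₁ ∧ Γ₁ = θ ^ 2 * Γ / α ∧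
      ∀ x ≥ (0:ℝ), ∀ y ≥ (0:ℝ), deriv Φ x * deriv Φ y ≤ Γ₁ * deriv Φ (x * y) := by
  have hα₀ : 0 < α := by linarith
  refine ⟨θ ^ 2 * Γ / α, by positivity, rfl, fun x hx y hy => ?_⟩
  rcases hx.eq_or_lt with rfl | hx
  · simp [hd0]
  rcases hy.eq_or_lt with rfl | hy
  · simp [hd0]
  have lower (z : ℝ) (hz : 0 < z) : α * Φ z ≤ z * deriv Φ z :=
    mul_le_mul_deriv_of_monotoneOn_div_rpow hz (hdiff z) hmono
  have upper (z : ℝ) (hz : 0 < z) : z * deriv Φ z ≤ θ * Φ z :=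
    mul_deriv_le_mul_of_antitoneOn_div_rpow hz (hdiff z) hanti
  have hΦ'y : 0 ≤ y * deriv Φ y := (mul_nonneg hα₀.le (hnonneg y)).trans (lower y hy)
  have hθΦx : 0 ≤ θ * Φ x :=
    ((mul_nonneg hα₀.le (hnonneg x)).trans (lower x hx)).trans (upper x hx)
  have key : x * y * (deriv Φ x * deriv Φ y) ≤ x * y * (θ ^ 2 * Γ / α * deriv Φ (x * y)) :=
    calc x * y * (deriv Φ x * deriv Φ y) = (x * deriv Φ x) * (y * deriv Φ y) := by ring
      _ ≤ (θ * Φ x) * (θ * Φ y) := mul_le_mul (upper x hx) (upper y hy) hΦ'y hθΦx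
      _ = θ ^ 2 * (Φ x * Φ y) := by ring
      _ ≤ θ ^ 2 * (Γ * Φ (x * y)) := 
          mul_le_mul_of_nonneg_left (hsub x hx.le y hy.le) (by positivity)
      _ = θ ^ 2 * Γ / α * (α * Φ (x * y)) := by field_simp
      _ ≤ θ ^ 2 * Γ / α * (x * y * deriv Φ (x * y)) := 
          mul_le_mul_of_nonneg_left (lower _ (by positivity)) (by positivity)
      _ = x * y * (θ ^ 2 * Γ / α * deriv Φ (x * y)) := by ring
  exact le_of_mul_le_mul_left key (by positivity)

/-- For a strictly convex differentiable nice Young function `Φ` with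
`Φ(x)/x^α` non-decreasing and `Φ(x)/x^θ` non-increasing (`1 < α < θ`), if
`Γ·Φ(xy) ≥ Φ(x)Φ(y)` for all `x,y ≥ 0`, then `Γ₁·Φ'(xy) ≥ Φ'(x)Φ'(y)` with
`Γ₁ = θ²Γ/α`. -/
theorem stmt4 (Φ : ℝ → ℝ) (α θ Γ : ℝ) (hα : 1 < α) (hαθ : α < θ) (hΓ : 0 ≤ Γ)
    (heven : ∀ x, Φ (-x) = Φ x)
    (hconv : StrictConvexOn ℝ Set.univ Φ)
    (hdiff : Differentiable ℝ Φ)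
    (hnonneg : ∀ x, 0 ≤ Φ x)
    (h0 : Φ 0 = 0)
    (hd0 : deriv Φ 0 = 0)
    (hvanish : ∀ x, Φ x = 0 → x = 0)
    (hsuper : Filter.Tendsto (fun x => Φ x / x) Filter.atTop Filter.atTop)
    (hmono : MonotoneOn (fun x => Φ x / x ^ α) (Set.Ioi 0))
    (hanti : AntitoneOn (fun x => Φ x / x ^ θ) (Set.Ioi 0))
    (hsub : ∀ x ≥ (0:ℝ), ∀ y ≥ (0:ℝ), Φ x * Φ y ≤ Γ * Φ (x * y)) :
    ∃ Γ₁ : ℝ, 0 ≤ Γ₁ ∧ Γ₁ = θ ^ 2 * Γ / α ∧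
      ∀ x ≥ (0:ℝ), ∀ y ≥ (0:ℝ), deriv Φ x * deriv Φ y ≤ Γ₁ * deriv Φ (x * y) :=
  stmt4_general Φ α θ Γ hα hΓ hdiff hnonneg hd0 hmono hanti hsub
end

section
/- Let 1 < α < θ and let Φ be a strictly convex differentiable nice Young function with Φ(x)/x^α non-decreasing, Φ(x)/x^θ non-increasing, and suppose Γ·Φ(xy) ≥ Φ(x)Φ(y) for all x,y ≥ 0 and some Γ ≥ 0. Then there exists Γ₃ ≥ 0 such that Φ*(xy) ≤ Γ₃·Φ*(x)·Φ*(y) for all x,y ≥ 0, where Φ* is the Legendre conjugate of Φ. -/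
open Real Set

/-- The Legendre conjugate of `Φ`: `Φ*(y) = sup_{x ≥ 0} (x·|y| − Φ(x))`. -/
noncomputable def youngConj (Φ : ℝ → ℝ) (y : ℝ) : ℝ :=
  sSup ((fun x => x * |y| - Φ x) '' Set.Ici 0)

open Filter Topology


lemma slope_rpow_tendsto (c : ℝ) :
    Tendsto (fun l : ℝ => (l ^ c - 1) / (l - 1)) (𝓝[≠] (1:ℝ)) (𝓝 c) := by
  have h : HasDerivAt (fun x : ℝ => x ^ c) (c * (1:ℝ) ^ (c - 1)) 1 :=
    Real.hasDerivAt_rpow_const (Or.inl one_ne_zero)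
  have h2 := hasDerivAt_iff_tendsto_slope.mp h
  simp only [Real.one_rpow, mul_one] at h2
  have : (fun l : ℝ => (l ^ c - 1) / (l - 1)) = slope (fun x : ℝ => x ^ c) 1 := by
    funext l
    rw [slope_def_field]
    simp [Real.one_rpow]
  rw [this]; exact h2

lemma key_lower (Φ : ℝ → ℝ) (α : ℝ)
    (hconv : StrictConvexOn ℝ Set.univ Φ) (hdiff : Differentiable ℝ Φ)
    (hmono : MonotoneOn (fun x => Φ x / x ^ α) (Set.Ioi 0)) :
    ∀ x > (0:ℝ), α * Φ x ≤ x * deriv Φ x := by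
  intro x hx
  have hcv := hconv.convexOn
  have htend : Tendsto (fun μ : ℝ => Φ x / x * ((μ ^ α - 1) / (μ - 1))) (𝓝[<] (1:ℝ))
      (𝓝 (Φ x / x * α)) :=
    tendsto_const_nhds.mul ((slope_rpow_tendsto α).mono_left
      (nhdsWithin_mono _ (fun y hy => ne_of_lt hy)))
  have hev : ∀ᶠ μ in 𝓝[<] (1:ℝ), Φ x / x * ((μ ^ α - 1) / (μ - 1)) ≤ deriv Φ x := by
    filter_upwards [Ioo_mem_nhdsLT_of_mem (by norm_num : (1:ℝ) ∈ Set.Ioc (0:ℝ) 1)] with μ hμ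
    obtain ⟨hμ0, hμ1⟩ := hμ
    have hμx : μ * x < x := by nlinarith
    have hslope := hcv.slope_le_deriv (mem_univ (μ * x)) (mem_univ x) hμx
      (hdiff x)
    rw [slope_def_field] at hslope
    have hxα : (0:ℝ) < x ^ α := Real.rpow_pos_of_pos hx α
    have hq : Φ (μ*x) ≤ μ ^ α * Φ x := by
      have h := hmono (mem_Ioi.mpr (by positivity)) (mem_Ioi.mpr hx) hμx.le
      simp only at h
      rw [Real.mul_rpow hμ0.le hx.le, div_le_div_iff₀ (by positivity) hxα] at h
      have h2 : Φ (μ*x) * x ^ α ≤ (μ ^ α * Φ x) * x ^ α := by nlinarith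
      exact le_of_mul_le_mul_right h2 hxα
    have heq : (μ ^ α - 1) / (μ - 1) = (1 - μ ^ α) / (1 - μ) := by
      rw [div_eq_div_iff (by linarith) (by linarith)]; ring
    have h1 : Φ x - Φ (μ*x) ≤ deriv Φ x * (x - μ*x) := by
      rw [div_le_iff₀ (by linarith)] at hslope
      linarith
    rw [heq, div_mul_div_comm, div_le_iff₀ (by nlinarith)]
    nlinarith
  have hfin := le_of_tendsto htend hev
  have := mul_le_mul_of_nonneg_right hfin hx.le
  rw [div_mul_eq_mul_div, div_mul_eq_mul_div, mul_div_assoc, div_self hx.ne', mul_one] at this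
  nlinarith

lemma key_upper (Φ : ℝ → ℝ) (θ : ℝ)
    (hconv : StrictConvexOn ℝ Set.univ Φ) (hdiff : Differentiable ℝ Φ)
    (hanti : AntitoneOn (fun x => Φ x / x ^ θ) (Set.Ioi 0)) :
    ∀ x > (0:ℝ), x * deriv Φ x ≤ θ * Φ x := by
  intro x hx
  have hcv := hconv.convexOn
  have htend : Tendsto (fun l : ℝ => Φ x / x * ((l ^ θ - 1) / (l - 1))) (𝓝[>] (1:ℝ))
      (𝓝 (Φ x / x * θ)) :=
    tendsto_const_nhds.mul ((slope_rpow_tendsto θ).mono_left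
      (nhdsWithin_mono _ (fun y hy => ne_of_gt hy)))
  have hev : ∀ᶠ l in 𝓝[>] (1:ℝ), deriv Φ x ≤ Φ x / x * ((l ^ θ - 1) / (l - 1)) := by
    filter_upwards [self_mem_nhdsWithin] with l hl
    rw [mem_Ioi] at hl
    have hlx : x < l * x := by nlinarith
    have hslope := hcv.deriv_le_slope (mem_univ x) (mem_univ (l * x)) hlx
      (hdiff x)
    rw [slope_def_field] at hslope
    have hxθ : (0:ℝ) < x ^ θ := Real.rpow_pos_of_pos hx θ
    have hq : Φ (l*x) ≤ l ^ θ * Φ x := by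
      have h := hanti (mem_Ioi.mpr hx) (mem_Ioi.mpr (by nlinarith)) hlx.le
      simp only at h
      rw [Real.mul_rpow (by linarith) hx.le, div_le_div_iff₀ (by positivity) hxθ] at h
      have h2 : Φ (l*x) * x ^ θ ≤ (l ^ θ * Φ x) * x ^ θ := by nlinarith
      exact le_of_mul_le_mul_right h2 hxθ
    have h1 : deriv Φ x * (l*x - x) ≤ Φ (l*x) - Φ x := by
      rw [le_div_iff₀ (by linarith)] at hslope
      linarith
    rw [div_mul_div_comm, le_div_iff₀ (by nlinarith)]
    nlinarith
  have hfin := ge_of_tendsto htend hev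
  have := mul_le_mul_of_nonneg_right hfin hx.le
  rw [div_mul_eq_mul_div, div_mul_eq_mul_div, mul_div_assoc, div_self hx.ne', mul_one] at this
  nlinarith

section helpers
variable (Φ : ℝ → ℝ)
lemma yc_bdd (hnonneg : ∀ x, 0 ≤ Φ x)
    (hsuper : Filter.Tendsto (fun x => Φ x / x) Filter.atTop Filter.atTop) (y : ℝ) :
    BddAbove ((fun x => x * |y| - Φ x) '' Set.Ici 0) := by
  obtain ⟨X, hX⟩ := eventually_atTop.mp ((hsuper.eventually_ge_atTop |y|).and
    (eventually_ge_atTop 1))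
  have hX1 : 1 ≤ X := (hX X le_rfl).2
  refine ⟨X * |y|, ?_⟩
  rintro z ⟨x, hx, rfl⟩
  rw [mem_Ici] at hx
  rcases le_or_gt X x with h | h
  · obtain ⟨h1, h2⟩ := hX x h
    have hx0 : (0:ℝ) < x := by linarith
    rw [le_div_iff₀ hx0] at h1
    have : (0:ℝ) ≤ X * |y| := by positivity
    simp only
    linarith
  · have : x * |y| ≤ X * |y| :=
      mul_le_mul_of_nonneg_right h.le (abs_nonneg y)
    have := hnonneg x
    simp only
    linarith

lemma yc_ge (hnonneg : ∀ x, 0 ≤ Φ x)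
    (hsuper : Filter.Tendsto (fun x => Φ x / x) Filter.atTop Filter.atTop) (y : ℝ)
    {x : ℝ} (hx : 0 ≤ x) : x * |y| - Φ x ≤ youngConj Φ y :=
  le_csSup (yc_bdd Φ hnonneg hsuper y) ⟨x, hx, rfl⟩

lemma yc_nonneg (hnonneg : ∀ x, 0 ≤ Φ x) (h0 : Φ 0 = 0)
    (hsuper : Filter.Tendsto (fun x => Φ x / x) Filter.atTop Filter.atTop) (y : ℝ) :
    0 ≤ youngConj Φ y := by
  have := yc_ge Φ hnonneg hsuper y (le_refl 0)
  simpa [h0] using this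

lemma yc_le_at_deriv (hconv : StrictConvexOn ℝ Set.univ Φ) (hdiff : Differentiable ℝ Φ)
    {r : ℝ} (hr : 0 ≤ deriv Φ r) :
    youngConj Φ (deriv Φ r) ≤ r * deriv Φ r - Φ r := by
  have hcv := hconv.convexOn
  apply csSup_le (Set.Nonempty.image _ ⟨0, self_mem_Ici⟩)
  rintro z ⟨x, _, rfl⟩
  simp only [abs_of_nonneg hr]
  rcases lt_trichotomy x r with h | h | h
  · have hs := hcv.slope_le_deriv (mem_univ x) (mem_univ r) h (hdiff r)
    rw [slope_def_field, div_le_iff₀ (by linarith)] at hs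
    nlinarith
  · subst h; linarith
  · have hs := hcv.deriv_le_slope (mem_univ r) (mem_univ x) h (hdiff r)
    rw [slope_def_field, le_div_iff₀ (by linarith)] at hs
    nlinarith

lemma deriv_surj (α : ℝ) (hα : 1 < α)
    (hconv : StrictConvexOn ℝ Set.univ Φ) (hdiff : Differentiable ℝ Φ)
    (hnonneg : ∀ x, 0 ≤ Φ x) (hd0 : deriv Φ 0 = 0)
    (hsuper : Filter.Tendsto (fun x => Φ x / x) Filter.atTop Filter.atTop)
    (hlow : ∀ x > (0:ℝ), α * Φ x ≤ x * deriv Φ x) :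
    ∀ u > (0:ℝ), ∃ s > (0:ℝ), deriv Φ s = u := by
  intro u hu
  obtain ⟨T, hT1, hT2⟩ := ((hsuper.eventually_gt_atTop u).and (eventually_gt_atTop 0)).exists
  have hΦT : u * T < Φ T := by
    rw [lt_div_iff₀ hT2] at hT1; linarith
  have hdT : u < deriv Φ T := by
    have h1 := hlow T hT2
    by_contra hcon
    push_neg at hcon
    nlinarith [mul_le_mul_of_nonneg_left hcon hT2.le, mul_pos hu hT2]
  have hd0' : deriv Φ 0 < u := by rw [hd0]; exact hu
  have hf : ∀ z ∈ Icc (0:ℝ) T, HasDerivWithinAt Φ (deriv Φ z) (Icc (0:ℝ) T) z :=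
    fun z _ => (hdiff z).hasDerivAt.hasDerivWithinAt
  obtain ⟨s, hs, hds⟩ := exists_hasDerivWithinAt_eq_of_gt_of_lt hT2.le hf hd0' hdT
  exact ⟨s, hs.1, hds⟩
end helpers

set_option maxHeartbeats 1000000 in
/-- For a strictly convex differentiable nice Young function `Φ` with
`Φ(x)/x^α` non-decreasing and `Φ(x)/x^θ` non-increasing (`1 < α < θ`) and
`Γ·Φ(xy) ≥ Φ(x)Φ(y)` for `x,y ≥ 0`, there exists `Γ₃ ≥ 0` with
`Φ*(xy) ≤ Γ₃·Φ*(x)·Φ*(y)` for all `x,y ≥ 0`. -/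
theorem stmt5 (Φ : ℝ → ℝ) (α θ Γ : ℝ) (hα : 1 < α) (hαθ : α < θ) (hΓ : 0 ≤ Γ)
    (heven : ∀ x, Φ (-x) = Φ x)
    (hconv : StrictConvexOn ℝ Set.univ Φ)
    (hdiff : Differentiable ℝ Φ)
    (hnonneg : ∀ x, 0 ≤ Φ x)
    (h0 : Φ 0 = 0)
    (hd0 : deriv Φ 0 = 0)
    (hvanish : ∀ x, Φ x = 0 → x = 0)
    (hsuper : Filter.Tendsto (fun x => Φ x / x) Filter.atTop Filter.atTop)
    (hmono : MonotoneOn (fun x => Φ x / x ^ α) (Set.Ioi 0))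
    (hanti : AntitoneOn (fun x => Φ x / x ^ θ) (Set.Ioi 0))
    (hsub : ∀ x ≥ (0:ℝ), ∀ y ≥ (0:ℝ), Φ x * Φ y ≤ Γ * Φ (x * y)) :
    ∃ Γ₃ : ℝ, 0 ≤ Γ₃ ∧
      ∀ x ≥ (0:ℝ), ∀ y ≥ (0:ℝ), youngConj Φ (x * y) ≤ Γ₃ * youngConj Φ x * youngConj Φ y := by
  have hθ1 : 1 < θ := hα.trans hαθ
  have hθ0 : (0:ℝ) < θ := by linarith
  have hα0 : (0:ℝ) < α := by linarith
  have hlow := key_lower Φ α hconv hdiff hmono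
  have hupp := key_upper Φ θ hconv hdiff hanti
  have hsurj := deriv_surj Φ α hα hconv hdiff hnonneg hd0 hsuper hlow
  have hsm : StrictMono (deriv Φ) := by
    have := hconv.strictMonoOn_deriv (fun x _ => hdiff x)
    rwa [strictMonoOn_univ] at this
  set C : ℝ := θ^3 * Γ / α^2 with hCdef
  have hC0 : 0 ≤ C := by positivity
  set lam : ℝ := max (C ^ (1/(α-1))) 1 with hlamdef
  have hlam1 : 1 ≤ lam := le_max_right _ _
  have hlam0 : 0 < lam := by linarith
  have hα1 : (0:ℝ) < α - 1 := by linarith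
  have hlampow : C ≤ lam ^ (α-1) := by
    calc C = (C ^ (1/(α-1))) ^ (α-1) := by
          rw [← Real.rpow_mul hC0, one_div_mul_cancel hα1.ne', Real.rpow_one]
      _ ≤ lam ^ (α-1) := Real.rpow_le_rpow (Real.rpow_nonneg hC0 _) (le_max_left _ _) hα1.le
  have h1θ : (0:ℝ) ≤ 1 - 1/θ := by
    have : 1/θ < 1 := by rw [div_lt_one hθ0]; exact hθ1
    linarith
  refine ⟨(1 - 1/θ) * lam * (α/(α-1))^2, by positivity, ?_⟩
  intro x hx y hy
  have hRHS0 : ∀ z w : ℝ, 0 ≤ (1 - 1/θ) * lam * (α/(α-1))^2 * youngConj Φ z * youngConj Φ w := by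
    intro z w
    have := yc_nonneg Φ hnonneg h0 hsuper z
    have := yc_nonneg Φ hnonneg h0 hsuper w
    positivity
  have hyc0 : youngConj Φ 0 ≤ 0 := by
    apply csSup_le (Set.Nonempty.image _ ⟨0, self_mem_Ici⟩)
    rintro z ⟨w, _, rfl⟩
    simp only [abs_zero, mul_zero, zero_sub, neg_nonpos]
    exact hnonneg w
  rcases eq_or_lt_of_le hx with h | hx0
  · rw [← h, zero_mul]
    exact hyc0.trans (hRHS0 0 y)
  rcases eq_or_lt_of_le hy with h | hy0
  · rw [← h, mul_zero]
    exact hyc0.trans (hRHS0 x 0)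
  -- main case
  obtain ⟨s, hs, hds⟩ := hsurj x hx0
  obtain ⟨t, ht, hdt⟩ := hsurj y hy0
  obtain ⟨r, hr, hdr⟩ := hsurj (x*y) (mul_pos hx0 hy0)
  have hst : (0:ℝ) < s * t := mul_pos hs ht
  have f1 : α * Φ s ≤ s * x := by have := hlow s hs; rwa [hds] at this
  have f2 : s * x ≤ θ * Φ s := by have := hupp s hs; rwa [hds] at this
  have f3 : α * Φ t ≤ t * y := by have := hlow t ht; rwa [hdt] at this
  have f4 : t * y ≤ θ * Φ t := by have := hupp t ht; rwa [hdt] at this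
  have f6 : r * (x*y) ≤ θ * Φ r := by have := hupp r hr; rwa [hdr] at this
  have f7 : Φ s * Φ t ≤ Γ * Φ (s*t) := hsub s hs.le t ht.le
  have f8 : α * Φ (s*t) ≤ (s*t) * deriv Φ (s*t) := hlow _ hst
  have f9 : (s*t) * deriv Φ (s*t) ≤ θ * Φ (s*t) := hupp _ hst
  set dst := deriv Φ (s*t) with hdst
  have hdst0 : 0 < dst := by rw [hdst, ← hd0]; exact hsm hst
  have hΦs0 : 0 ≤ Φ s := hnonneg s
  have hΦt0 : 0 ≤ Φ t := hnonneg t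
  have hΦst0 : 0 ≤ Φ (s*t) := hnonneg (s*t)
  -- x*y ≤ (θ^2*Γ/α) * dst
  have step1 : (s*t) * (x*y) ≤ (s*t) * ((θ^2*Γ/α) * dst) := by
    have h1 : (s*x) * (t*y) ≤ (θ * Φ s) * (θ * Φ t) :=
      mul_le_mul f2 f4 (by positivity) (by positivity)
    have h2 : (θ * Φ s) * (θ * Φ t) = θ^2 * (Φ s * Φ t) := by ring
    have h3 : θ^2 * (Φ s * Φ t) ≤ θ^2 * (Γ * Φ (s*t)) :=
      mul_le_mul_of_nonneg_left f7 (by positivity)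
    have h4 : Φ (s*t) ≤ (s*t) * dst / α := by
      rw [le_div_iff₀ hα0]; linarith only [f8]
    have h5 : θ^2 * (Γ * Φ (s*t)) ≤ θ^2 * (Γ * ((s*t) * dst / α)) :=
      mul_le_mul_of_nonneg_left (mul_le_mul_of_nonneg_left h4 hΓ)
        (by positivity : (0:ℝ) ≤ θ^2)
    have e : (s*t) * (x*y) = (s*x) * (t*y) := by ring
    have e2 : θ^2 * (Γ * ((s*t) * dst / α)) = (s*t) * ((θ^2*Γ/α) * dst) := by
      field_simp
    rw [e, ← e2]
    linarith only [h1, h2.le, h3, h5]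
  have hxyK : x*y ≤ (θ^2*Γ/α) * dst := le_of_mul_le_mul_left step1 hst
  -- (θ^2*Γ/α) * dst ≤ deriv Φ (lam*(s*t))
  set L : ℝ := lam ^ (α-1) with hLdef
  have hL1 : 1 ≤ L := Real.one_le_rpow hlam1 hα1.le
  have hlamα : lam ^ α = L * lam := by
    calc lam ^ α = lam ^ ((α-1)+1) := by norm_num
      _ = lam ^ (α-1) * lam ^ (1:ℝ) := Real.rpow_add hlam0 _ _
      _ = L * lam := by rw [Real.rpow_one]
  have hL0 : 0 < L := by linarith
  have hq : L * lam * Φ (s*t) ≤ Φ (lam*(s*t)) := by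
    have h := hmono (mem_Ioi.mpr hst) (mem_Ioi.mpr (by positivity : (0:ℝ) < lam*(s*t)))
      (le_mul_of_one_le_left hst.le hlam1)
    simp only at h
    have hstα : (0:ℝ) < (s*t)^α := Real.rpow_pos_of_pos hst α
    rw [Real.mul_rpow hlam0.le hst.le,
      div_le_div_iff₀ hstα (by positivity)] at h
    rw [hlamα] at h
    have h2 : (L * lam * Φ (s*t)) * (s*t)^α ≤ Φ (lam*(s*t)) * (s*t)^α := by linarith only [h]
    exact le_of_mul_le_mul_right h2 hstα
  set dl := deriv Φ (lam*(s*t)) with hdl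
  have f10 : α * Φ (lam*(s*t)) ≤ (lam*(s*t)) * dl := hlow _ (by positivity)
  have g0 : (s*t)*dst/θ ≤ Φ (s*t) := by
    rw [div_le_iff₀ hθ0]; linarith only [f9]
  have hKdl : (θ^2*Γ/α) * dst ≤ dl := by
    have g1 : α*(L * lam * Φ (s*t)) ≤ α * Φ (lam*(s*t)) :=
      mul_le_mul_of_nonneg_left hq hα0.le
    have g2 : (α*L*lam)*((s*t)*dst/θ) ≤ (α*L*lam)*(Φ (s*t)) :=
      mul_le_mul_of_nonneg_left g0 (by positivity)
    have g3 : C * (α*lam*((s*t)*dst/θ)) ≤ L * (α*lam*((s*t)*dst/θ)) :=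
      mul_le_mul_of_nonneg_right hlampow (by positivity)
    have e3 : C * (α*lam*((s*t)*dst/θ)) = (lam*(s*t)) * ((θ^2*Γ/α)*dst) := by
      rw [hCdef]; field_simp
    have hc1 : (lam*(s*t)) * ((θ^2*Γ/α)*dst) ≤ (lam*(s*t)) * dl := by
      linarith only [g1, g2, g3, f10, e3.le, e3.ge]
    exact le_of_mul_le_mul_left hc1 (by positivity)
  have hrle : r ≤ lam*(s*t) := by
    apply hsm.le_iff_le.mp
    rw [hdr, ← hdl]
    exact hxyK.trans hKdl
  set P := youngConj Φ x with hP
  set Q := youngConj Φ y with hQ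
  have hP0 : 0 ≤ P := yc_nonneg Φ hnonneg h0 hsuper x
  have hQ0 : 0 ≤ Q := yc_nonneg Φ hnonneg h0 hsuper y
  have hycle : youngConj Φ (x*y) ≤ r*(x*y) - Φ r := by
    have h := yc_le_at_deriv Φ hconv hdiff (r := r) (by rw [hdr]; positivity)
    rwa [hdr] at h
  have hΦr : r*(x*y)/θ ≤ Φ r := by rw [div_le_iff₀ hθ0]; linarith only [f6]
  have haP : (α-1)*(s*x) ≤ α*P := by
    have h := yc_ge Φ hnonneg hsuper x hs.le
    rw [abs_of_pos hx0] at h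
    linarith only [mul_le_mul_of_nonneg_left h hα0.le, f1]
  have hbQ : (α-1)*(t*y) ≤ α*Q := by
    have h := yc_ge Φ hnonneg hsuper y ht.le
    rw [abs_of_pos hy0] at h
    linarith only [mul_le_mul_of_nonneg_left h hα0.le, f3]
  have hsx0 : 0 ≤ s*x := by positivity
  have hty0 : 0 ≤ t*y := by positivity
  have hmul : ((α-1)*(s*x))*((α-1)*(t*y)) ≤ (α*P)*(α*Q) :=
    mul_le_mul haP hbQ (by positivity) (by positivity)
  have hab : (s*x)*(t*y) ≤ (α/(α-1))^2*(P*Q) := by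
    have h2 : ((α-1)^2) * ((s*x)*(t*y)) ≤ ((α-1)^2) * ((α/(α-1))^2*(P*Q)) := by
      have e : ((α-1)^2) * ((α/(α-1))^2*(P*Q)) = (α*P)*(α*Q) := by
        field_simp
      rw [e]; linarith only [hmul]
    exact le_of_mul_le_mul_left h2 (by positivity)
  have hcoef : (0:ℝ) ≤ (1 - 1/θ) * lam := mul_nonneg h1θ hlam0.le
  calc youngConj Φ (x*y) ≤ r*(x*y) - Φ r := hycle
    _ ≤ r*(x*y) - r*(x*y)/θ := by linarith only [hΦr]
    _ = (1 - 1/θ) * (r*(x*y)) := by ring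
    _ ≤ (1 - 1/θ) * ((lam*(s*t))*(x*y)) := by
        apply mul_le_mul_of_nonneg_left _ h1θ
        exact mul_le_mul_of_nonneg_right hrle (by positivity)
    _ = (1 - 1/θ) * lam * ((s*x)*(t*y)) := by ring
    _ ≤ (1 - 1/θ) * lam * ((α/(α-1))^2*(P*Q)) :=
        mul_le_mul_of_nonneg_left hab hcoef
    _ = (1 - 1/θ) * lam * (α/(α-1))^2 * P * Q := by ring
end

section
/- Let H : [0,∞) → [0,∞) be convex with H(0)=0 and define ω_H(x) = sup_{t>0} H(tx)/H(t), assumed finite on (0,∞). Then ω_H is convex, submultiplicative (ω_H(ab) ≤ ω_H(a)·ω_H(b) for all a,b ≥ 0), satisfies ω_H ≥ H/H(1), and if H(x)/x² is non-decreasing on (0,∞), then so is ω_H(x)/x². -/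
/-!
If `H` vanished at some `t > 0`, let `s > 0` be the supremum of the points of `[0, ∞)` where
`H ≤ 0`. Convexity along the secant from such a point `z` just below `s` to `c u`, with `u` just
above `s`, forces `H u ≤ (u - z) / (c u - z) · H (c u)`, so the ratios `H (c u) / H u` blow up as
`u ↓ s`, contradicting the finiteness of `ω_H(c)` for any `c > 1`. Hence `H > 0` on `(0, ∞)`,
and the four properties of `ω_H` follow from its definition as a supremum of the ratios
`H (t x) / H t`: convexity because each ratio is convex in `x`, submultiplicativity from the
factorisation `H (t a b) / H t = H (t b · a) / H (t b) · H (t b) / H t`, and the monotonicity of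
`ω_H(x) / x²` ratio by ratio.
-/

open Real Set

/-- `ω_H(x) = sup_{t > 0} H(tx)/H(t)`. -/
noncomputable def omegaH (H : ℝ → ℝ) (x : ℝ) : ℝ :=
  ⨆ t : {t : ℝ // 0 < t}, H (t * x) / H t

theorem ConvexOn.ciSup {E ι : Type*} [AddCommMonoid E] [Module ℝ E] [Nonempty ι] {s : Set E}
    {f : ι → E → ℝ} (hf : ∀ i, ConvexOn ℝ s (f i))
    (hbdd : ∀ x ∈ s, BddAbove (range fun i => f i x)) :
    ConvexOn ℝ s fun x => ⨆ i, f i x :=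
  ⟨(hf (Classical.arbitrary ι)).1, fun _ hx _ hy _ _ ha hb hab =>
    ciSup_le fun i => ((hf i).2 hx hy ha hb hab).trans <|
      add_le_add (smul_le_smul_of_nonneg_left (le_ciSup (hbdd _ hx) i) ha)
        (smul_le_smul_of_nonneg_left (le_ciSup (hbdd _ hy) i) hb)⟩

theorem ConvexOn.lt_of_map_nonpos {H : ℝ → ℝ} (hconv : ConvexOn ℝ (Ici 0) H) (h0 : H 0 = 0)
    {x z : ℝ} (hx : 0 ≤ x) (hHx : 0 < H x) (hz : 0 ≤ z) (hHz : H z ≤ 0) : z < x := by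
  by_contra! hxz
  have hx : 0 < x := hx.lt_of_ne (by rintro rfl; linarith)
  have hslope :=
    hconv.monotoneOn_slope_gt self_mem_Ici ⟨hx.le, hx⟩ ⟨hz, hx.trans_le hxz⟩ hxz
  simp only [slope_def_field, h0, sub_zero] at hslope
  linarith [div_nonpos_of_nonpos_of_nonneg hHz hz, div_pos hHx hx]

theorem ConvexOn.pos_of_bddAbove_ratio {H : ℝ → ℝ} (hconv : ConvexOn ℝ (Ici 0) H)
    (h0 : H 0 = 0) (h1 : 0 < H 1) {c : ℝ} (hc : 1 < c)
    (hbdd : BddAbove (range fun t : {t : ℝ // 0 < t} => H (t * c) / H t)) {t : ℝ} (ht : 0 < t) :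
    0 < H t := by
  by_contra! hHt
  obtain ⟨M, hM⟩ := hbdd
  set Z := {z : ℝ | 0 ≤ z ∧ H z ≤ 0}
  have hZbdd : BddAbove Z :=
    ⟨1, fun z ⟨hz, hHz⟩ => (hconv.lt_of_map_nonpos h0 zero_le_one h1 hz hHz).le⟩
  have htZ : t ∈ Z := ⟨ht.le, hHt⟩
  set s := sSup Z
  have hts : t ≤ s := le_csSup hZbdd htZ
  set δ := (c - 1) * t / (2 * (|M| + 1))
  have hδ : 0 < δ := div_pos (mul_pos (sub_pos.2 hc) ht) (by positivity)
  obtain ⟨z, hzZ, hz⟩ := exists_lt_of_lt_csSup ⟨t, htZ⟩ (sub_lt_self s hδ)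
  have hzs : z ≤ s := le_csSup hZbdd hzZ
  set u := s + δ with hu_def
  have hu : 0 < u := by linarith
  have hHu : 0 < H u := by
    by_contra! hHu
    exact notMem_of_csSup_lt (lt_add_of_pos_right s hδ) hZbdd ⟨hu.le, hHu⟩
  have hHcu : H (u * c) ≤ M * H u := (div_le_iff₀ hHu).1 (hM ⟨⟨u, hu⟩, rfl⟩)
  have hsecant : (u * c - z) * H u ≤ (u * c - u) * H z + (u - z) * H (u * c) :=
    hconv.secant_mono_aux1 hzZ.1 (mem_Ici.2 (by positivity)) (by linarith)
      (lt_mul_of_one_lt_right hu hc)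
  have hratio : u * c - z ≤ (u - z) * M := by
    refine le_of_mul_le_mul_right ?_ hHu
    have hzterm : (u * c - u) * H z ≤ 0 :=
      mul_nonpos_of_nonneg_of_nonpos (by nlinarith) hzZ.2
    have hcuterm : (u - z) * H (u * c) ≤ (u - z) * (M * H u) :=
      mul_le_mul_of_nonneg_left hHcu (by linarith)
    linarith
  have hMδ : (u - z) * M < (c - 1) * t := by
    have hδM : 2 * δ * (|M| + 1) = (c - 1) * t := by
      simp only [δ]; field_simp
    nlinarith [le_abs_self M, abs_nonneg M]
  have hgap : (c - 1) * t ≤ u * c - z := by nlinarith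
  linarith

variable {H : ℝ → ℝ}

theorem bddAbove_ratio_of_nonneg (h0 : H 0 = 0)
    (hfin : ∀ x > (0:ℝ), BddAbove (range fun t : {t : ℝ // 0 < t} => H (t * x) / H t)) :
    ∀ x ≥ (0:ℝ), BddAbove (range fun t : {t : ℝ // 0 < t} => H (t * x) / H t) := by
  intro x hx
  rcases hx.eq_or_lt with rfl | hx
  · exact ⟨0, by rintro _ ⟨t, rfl⟩; simp [h0]⟩
  · exact hfin x hx

section Ratios

variable (hnonneg : ∀ x ≥ (0:ℝ), 0 ≤ H x)
  (hbdd : ∀ x ≥ (0:ℝ), BddAbove (range fun t : {t : ℝ // 0 < t} => H (t * x) / H t))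
include hbdd

theorem div_le_omegaH {x : ℝ} (hx : 0 ≤ x) : H x / H 1 ≤ omegaH H x := by
  have h := le_ciSup (hbdd x hx) ⟨1, one_pos⟩
  simp only [one_mul] at h
  exact h

include hnonneg

theorem omegaH_nonneg {x : ℝ} (hx : 0 ≤ x) : 0 ≤ omegaH H x :=
  (div_nonneg (hnonneg x hx) (hnonneg 1 zero_le_one)).trans (div_le_omegaH hbdd hx)

theorem convexOn_omegaH (hconv : ConvexOn ℝ (Ici 0) H) : ConvexOn ℝ (Ici 0) (omegaH H) := by
  refine ConvexOn.ciSup (fun t => ?_) hbdd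
  have hscaled : ConvexOn ℝ (Ici 0) fun x => H (t * x) :=
    (hconv.comp_linearMap (LinearMap.mulLeft ℝ (t : ℝ))).subset
      (fun x hx => mul_nonneg t.2.le hx) (convex_Ici 0)
  simpa only [div_eq_inv_mul, smul_eq_mul] using hscaled.smul (inv_nonneg.2 (hnonneg t t.2.le))

theorem omegaH_mul_le (h0 : H 0 = 0) (hpos : ∀ t > (0:ℝ), 0 < H t) {a b : ℝ} (ha : 0 ≤ a)
    (hb : 0 ≤ b) : omegaH H (a * b) ≤ omegaH H a * omegaH H b := by
  refine ciSup_le fun t => ?_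
  rcases hb.eq_or_lt with rfl | hb
  · simpa [h0] using mul_nonneg (omegaH_nonneg hnonneg hbdd ha) (omegaH_nonneg hnonneg hbdd hb)
  have htb : 0 < t * b := mul_pos t.2 hb
  calc H (t * (a * b)) / H t = H (t * b * a) / H (t * b) * (H (t * b) / H t) := by
        rw [div_mul_div_cancel₀ (hpos _ htb).ne', mul_comm a b, mul_assoc]
    _ ≤ omegaH H a * omegaH H b :=
        mul_le_mul (le_ciSup (hbdd a ha) ⟨t * b, htb⟩) (le_ciSup (hbdd b hb.le) t)
          (div_nonneg (hnonneg _ htb.le) (hnonneg t t.2.le)) (omegaH_nonneg hnonneg hbdd ha)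

theorem monotoneOn_omegaH_div_sq (hmono : MonotoneOn (fun x => H x / x ^ 2) (Ioi 0)) :
    MonotoneOn (fun x => omegaH H x / x ^ 2) (Ioi 0) := by
  intro x (hx : 0 < x) y (hy : 0 < y) hxy
  rw [div_le_div_iff₀ (by positivity) (by positivity), ← le_div_iff₀ (by positivity)]
  refine ciSup_le fun t => ?_
  have htx : (0:ℝ) < t * x := mul_pos t.2 hx
  have hty : (0:ℝ) < t * y := mul_pos t.2 hy
  have hscaled : H (t * x) ≤ H (t * y) * x ^ 2 / y ^ 2 := by
    have h := hmono htx hty (mul_le_mul_of_nonneg_left hxy t.2.le)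
    rw [div_le_div_iff₀ (by positivity) (by positivity)] at h
    rw [le_div_iff₀ (by positivity)]
    nlinarith [pow_pos t.2 2]
  calc H (t * x) / H t ≤ H (t * y) * x ^ 2 / y ^ 2 / H t :=
        div_le_div_of_nonneg_right hscaled (hnonneg t t.2.le)
    _ = H (t * y) / H t * x ^ 2 / y ^ 2 := by ring
    _ ≤ omegaH H y * x ^ 2 / y ^ 2 := by
        gcongr
        exact le_ciSup (hbdd y hy.le) t

end Ratios

/-- For convex `H : [0,∞) → [0,∞)` with `H(0)=0`, `H(1)>0` and `ω_H` finite on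
`(0,∞)`: `ω_H` is convex, submultiplicative, dominates `H/H(1)`, and inherits the
monotonicity of `H(x)/x²`. -/
theorem stmt7 (H : ℝ → ℝ)
    (hconv : ConvexOn ℝ (Set.Ici 0) H)
    (hnonneg : ∀ x ≥ (0:ℝ), 0 ≤ H x)
    (h0 : H 0 = 0) (h1 : 0 < H 1)
    (hfin : ∀ x > (0:ℝ), BddAbove (Set.range fun t : {t : ℝ // 0 < t} => H (t * x) / H t)) :
    ConvexOn ℝ (Set.Ici 0) (omegaH H) ∧
    (∀ a ≥ (0:ℝ), ∀ b ≥ (0:ℝ), omegaH H (a * b) ≤ omegaH H a * omegaH H b) ∧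
    (∀ x ≥ (0:ℝ), H x / H 1 ≤ omegaH H x) ∧
    (MonotoneOn (fun x => H x / x ^ 2) (Set.Ioi 0) →
      MonotoneOn (fun x => omegaH H x / x ^ 2) (Set.Ioi 0)) := by
  have hbdd := bddAbove_ratio_of_nonneg h0 hfin
  have hpos : ∀ t > (0:ℝ), 0 < H t := fun t ht =>
    hconv.pos_of_bddAbove_ratio h0 h1 one_lt_two (hfin 2 two_pos) ht
  exact ⟨convexOn_omegaH hnonneg hbdd hconv,
    fun a ha b hb => omegaH_mul_le hnonneg hbdd h0 hpos ha hb,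
    fun x hx => div_le_omegaH hbdd hx,
    monotoneOn_omegaH_div_sq hnonneg hbdd⟩
end

section
/- For every ρ > 1, t > 0 and x ∈ [0, √(2ρ)·t], it holds Ψ_{t²}(x²) ≤ (1+√(2ρ))²·(x−t)², where Ψ_a(b) = b·log(b/a) − (b−a). -/
open Real Set

/-- For `ρ > 1`, `t > 0` and `x ∈ [0, √(2ρ)·t]`,
`Ψ_{t²}(x²) ≤ (1+√(2ρ))²·(x−t)²`, where `Ψ_a(b) = b·log(b/a) − (b−a)`. -/
theorem stmt9 :
    ∀ ρ > (1:ℝ), ∀ t > (0:ℝ), ∀ x ∈ Set.Icc (0:ℝ) (Real.sqrt (2 * ρ) * t),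
      x ^ 2 * Real.log (x ^ 2 / t ^ 2) - (x ^ 2 - t ^ 2)
        ≤ (1 + Real.sqrt (2 * ρ)) ^ 2 * (x - t) ^ 2 := by
  intro ρ hρ t ht x hx
  obtain ⟨hx0, hxu⟩ := hx
  set s := Real.sqrt (2 * ρ) with hs
  have hs0 : (0:ℝ) ≤ s := Real.sqrt_nonneg _
  have key : x ^ 2 * Real.log (x ^ 2 / t ^ 2) ≤ 2 * x ^ 2 * (x / t - 1) := by
    rcases eq_or_lt_of_le hx0 with h | h
    · simp [← h]
    · have hdiv : (0:ℝ) < x / t := div_pos h ht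
      have hlog : Real.log (x ^ 2 / t ^ 2) = 2 * Real.log (x / t) := by
        rw [← div_pow, Real.log_pow]
        push_cast
        ring
      have hle : Real.log (x / t) ≤ x / t - 1 := Real.log_le_sub_one_of_pos hdiv
      rw [hlog]
      have hx2 : (0:ℝ) ≤ x ^ 2 := sq_nonneg x
      nlinarith
  have h1 : 2 * x ^ 2 * (x / t - 1) - (x ^ 2 - t ^ 2)
      = (x - t) ^ 2 * (2 * x + t) / t := by
    field_simp
    ring
  have h2 : (x - t) ^ 2 * (2 * x + t) / t ≤ (1 + s) ^ 2 * (x - t) ^ 2 := by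
    rw [div_le_iff₀ ht]
    nlinarith [mul_nonneg (sq_nonneg (x - t)) (sub_nonneg.mpr hxu),
      mul_nonneg (mul_nonneg (sq_nonneg (x - t)) (sq_nonneg s)) ht.le]
  linarith [key, h1 ▸ h2]
end

section
/- Let Q be a finite measure on a space X, let K > Q(X), and let A ⊆ X be measurable with Q(A) > 0. Then sup{ ∫_X 1_A·h dQ : h ≥ 0 measurable, ∫_X e^h dQ ≤ K } = Q(A)·log(1 + (K − Q(X))/Q(A)). -/
open Real Set MeasureTheory

/-!
For `h ≥ 0` with `∫ e^h dQ ≤ K`, the bound `e^h ≥ 1` on `Aᶜ` leaves at most `K - Q(Aᶜ)` of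
exponential mass on `A`, and the Fenchel–Young inequality `x ≤ c - 1 + e^(x - c)` turns this into
`∫_A h dQ ≤ (c - 1) Q(A) + e^(-c) (K - Q(Aᶜ))`. The choice `e^c = (K - Q(Aᶜ)) / Q(A)` makes the
right-hand side `c Q(A)`, and the constant `c` on `A` (and `0` off `A`) attains it.
-/

lemma Set.exp_indicator_const_eq_piecewise {X : Type*} (s : Set X) [DecidablePred (· ∈ s)]
    (c : ℝ) :
    (fun x => exp (s.indicator (fun _ => c) x)) = s.piecewise (fun _ => exp c) (fun _ => 1) := by
  funext x
  by_cases hx : x ∈ s <;> simp [hx]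

namespace MeasureTheory

variable {X : Type*} [MeasurableSpace X] {μ : Measure X}

lemma Integrable.of_integrable_exp {f : X → ℝ} (hf : AEStronglyMeasurable f μ)
    (hf_nonneg : ∀ᵐ x ∂μ, 0 ≤ f x) (hexp : Integrable (fun x => exp (f x)) μ) :
    Integrable f μ :=
  hexp.mono' hf <| by
    filter_upwards [hf_nonneg] with x hx
    rw [norm_of_nonneg hx]
    linarith [add_one_le_exp (f x)]

lemma integral_le_mul_add_exp_neg_mul_integral_exp [IsFiniteMeasure μ] {f : X → ℝ}
    (hf : Integrable f μ) (hexp : Integrable (fun x => exp (f x)) μ) (c : ℝ) :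
    ∫ x, f x ∂μ ≤ (c - 1) * μ.real univ + exp (-c) * ∫ x, exp (f x) ∂μ := by
  have young : ∀ x, f x ≤ (c - 1) + exp (-c) * exp (f x) := fun x => by
    rw [← exp_add]
    linarith [add_one_le_exp (-c + f x)]
  calc ∫ x, f x ∂μ ≤ ∫ x, (c - 1) + exp (-c) * exp (f x) ∂μ :=
        integral_mono hf ((integrable_const _).add (hexp.const_mul _)) young
    _ = (c - 1) * μ.real univ + exp (-c) * ∫ x, exp (f x) ∂μ := by
        rw [integral_add (integrable_const _) (hexp.const_mul _), integral_const,
          integral_const_mul, smul_eq_mul, mul_comm]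

lemma measureReal_compl_add_setIntegral_le [IsFiniteMeasure μ] {f : X → ℝ} {s : Set X}
    (hs : MeasurableSet s) (hf : Integrable f μ) (hf_one : ∀ x, 1 ≤ f x) :
    μ.real sᶜ + ∫ x in s, f x ∂μ ≤ ∫ x, f x ∂μ := by
  have hcompl : μ.real sᶜ ≤ ∫ x in sᶜ, f x ∂μ := by
    simpa using setIntegral_ge_of_const_le_real hs.compl (measure_ne_top μ _)
      (fun x _ => hf_one x) hf.integrableOn
  linarith [integral_add_compl hs hf]

theorem setIntegral_le_mul_log_of_integral_exp_le [IsFiniteMeasure μ] {h : X → ℝ} {s : Set X}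
    {K : ℝ} (hs : MeasurableSet s) (hs_pos : 0 < μ.real s) (hm : AEStronglyMeasurable h μ)
    (h_nonneg : ∀ x, 0 ≤ h x) (hexp : Integrable (fun x => exp (h x)) μ)
    (hK : ∫ x, exp (h x) ∂μ ≤ K) :
    ∫ x in s, h x ∂μ ≤ μ.real s * log ((K - μ.real sᶜ) / μ.real s) := by
  have : NeZero (μ.restrict s) := ⟨by
    rw [Ne, Measure.restrict_eq_zero]
    exact fun h0 => by simp [Measure.real, h0] at hs_pos⟩
  have hmass : μ.real sᶜ + ∫ x in s, exp (h x) ∂μ ≤ K :=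
    (measureReal_compl_add_setIntegral_le hs hexp fun x => one_le_exp (h_nonneg x)).trans hK
  have hmass_pos : 0 < K - μ.real sᶜ := by
    linarith [integral_exp_pos hexp.restrict (μ := μ.restrict s)]
  set c := log ((K - μ.real sᶜ) / μ.real s)
  have hexp_neg_c : exp (-c) = μ.real s / (K - μ.real sᶜ) := by
    rw [exp_neg, exp_log (by positivity), inv_div]
  calc ∫ x in s, h x ∂μ
      ≤ (c - 1) * μ.real s + exp (-c) * ∫ x in s, exp (h x) ∂μ := by
        simpa using integral_le_mul_add_exp_neg_mul_integral_exp
          (hexp.restrict.of_integrable_exp hm.restrict (ae_of_all _ h_nonneg)) hexp.restrict c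
    _ ≤ (c - 1) * μ.real s + exp (-c) * (K - μ.real sᶜ) := by gcongr; linarith
    _ = μ.real s * c := by rw [hexp_neg_c]; field_simp; ring

lemma integrable_exp_indicator_const [IsFiniteMeasure μ] {s : Set X} (hs : MeasurableSet s)
    (c : ℝ) : Integrable (fun x => exp (s.indicator (fun _ => c) x)) μ := by
  classical
  rw [exp_indicator_const_eq_piecewise]
  exact Integrable.piecewise hs (integrableOn_const (measure_ne_top μ _))
    (integrableOn_const (measure_ne_top μ _))

lemma integral_exp_indicator_const [IsFiniteMeasure μ] {s : Set X} (hs : MeasurableSet s)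
    (c : ℝ) : ∫ x, exp (s.indicator (fun _ => c) x) ∂μ = μ.real s * exp c + μ.real sᶜ := by
  classical
  rw [exp_indicator_const_eq_piecewise, integral_piecewise hs
    (integrableOn_const (measure_ne_top μ _)) (integrableOn_const (measure_ne_top μ _)),
    setIntegral_const, setIntegral_const, smul_eq_mul, smul_eq_mul, mul_one]

theorem isGreatest_setIntegral_of_integral_exp_le [IsFiniteMeasure μ] {s : Set X} {K : ℝ}
    (hs : MeasurableSet s) (hs_pos : 0 < μ.real s) (hK : μ.real univ ≤ K) :
    IsGreatest {r : ℝ | ∃ h : X → ℝ, Measurable h ∧ (∀ x, 0 ≤ h x) ∧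
        Integrable (fun x => exp (h x)) μ ∧ ∫ x, exp (h x) ∂μ ≤ K ∧ r = ∫ x in s, h x ∂μ}
      (μ.real s * log (1 + (K - μ.real univ) / μ.real s)) := by
  have hratio : (K - μ.real sᶜ) / μ.real s = 1 + (K - μ.real univ) / μ.real s := by
    rw [measureReal_compl hs]; field_simp; ring
  have hone : 1 ≤ 1 + (K - μ.real univ) / μ.real s :=
    le_add_of_nonneg_right (div_nonneg (sub_nonneg.2 hK) hs_pos.le)
  set c := log (1 + (K - μ.real univ) / μ.real s)
  have hexp_c : exp c = 1 + (K - μ.real univ) / μ.real s := exp_log (by linarith)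
  refine ⟨⟨s.indicator (fun _ => c), measurable_const.indicator hs,
    indicator_nonneg fun _ _ => log_nonneg hone,
    integrable_exp_indicator_const hs c, ?_, ?_⟩, ?_⟩
  · rw [integral_exp_indicator_const hs, hexp_c, measureReal_compl hs]
    field_simp
    linarith
  · rw [setIntegral_congr_fun hs fun x hx => indicator_of_mem hx _, setIntegral_const,
      smul_eq_mul]
  · rintro r ⟨h, hm, h_nonneg, hexp, hmass, rfl⟩
    simpa only [hratio] using setIntegral_le_mul_log_of_integral_exp_le hs hs_pos
      hm.aestronglyMeasurable h_nonneg hexp hmass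

end MeasureTheory

/-- For a finite measure `Q`, `K > Q(X)` and measurable `A` with `Q(A) > 0`,
`sup{∫ 1_A h dQ : h ≥ 0, ∫ e^h dQ ≤ K} = Q(A)·log(1 + (K − Q(X))/Q(A))`. -/
theorem stmt11 {X : Type*} [MeasurableSpace X] (Q : Measure X) [IsFiniteMeasure Q]
    (K : ℝ) (hK : (Q Set.univ).toReal < K)
    (A : Set X) (hA : MeasurableSet A) (hApos : 0 < (Q A).toReal) :
    sSup {r : ℝ | ∃ h : X → ℝ, Measurable h ∧ (∀ x, 0 ≤ h x) ∧
        Integrable (fun x => Real.exp (h x)) Q ∧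
        (∫ x, Real.exp (h x) ∂Q) ≤ K ∧ r = ∫ x in A, h x ∂Q}
      = (Q A).toReal * Real.log (1 + (K - (Q Set.univ).toReal) / (Q A).toReal) := by
  exact (isGreatest_setIntegral_of_integral_exp_le hA hApos hK.le).csSup_eq
end

section
/- Let q ≥ 2 and n = e^{−V} on [m,∞), where |V(x)| ≤ C for x ∈ [m, m+K], V is C¹ on [m+K,∞) with V'(x) ≥ δ > 0 there, and V(x) ≥ −C for all x ≥ m. Then for every x ≥ m: (q−1)·n(x)^{−1/(q−1)} ≥ ε·∫_m^x n(u)^{−1/(q−1)} du, with ε = 1/(1/δ + (K/(q−1))·e^{2C/(q−1)}). -/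
open Real Set MeasureTheory intervalIntegral

/-! With `β = 1/(q-1)` the integrand is `F = exp (β V)`. On `[m, m+K]` it is at most `exp (β C)`,
so that piece contributes at most `K exp (β C)`. On `[m+K, x]` we have `F' = β V' F ≥ β δ F`, so
`∫ F ≤ F x / (β δ)`. Finally `V x ≥ -C` gives `exp (β C) ≤ exp (2 β C) F x`. -/

theorem integral_mul_le_sub_of_mul_le_deriv {f f' : ℝ → ℝ} {a b c : ℝ} (hab : a ≤ b)
    (hf : ∀ x ∈ Icc a b, HasDerivAt f (f' x) x) (hle : ∀ x ∈ Ioo a b, c * f x ≤ f' x) :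
    c * ∫ x in a..b, f x ≤ f b - f a := by
  have hcont : ContinuousOn f (Icc a b) := fun x hx => (hf x hx).continuousAt.continuousWithinAt
  rw [← intervalIntegral.integral_const_mul]
  exact integral_le_sub_of_hasDeriv_right_of_le hab hcont
    (fun x hx => (hf x (Ioo_subset_Icc_self hx)).hasDerivWithinAt)
    (continuousOn_const.mul hcont).integrableOn_Icc hle

theorem mul_integral_exp_mul_le_of_le_deriv {V V' : ℝ → ℝ} {a b β δ : ℝ} (hβ : 0 ≤ β)
    (hab : a ≤ b) (hV : ∀ x ∈ Icc a b, HasDerivAt V (V' x) x)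
    (hδ : ∀ x ∈ Ioo a b, δ ≤ V' x) :
    β * δ * ∫ x in a..b, exp (β * V x) ≤ exp (β * V b) := by
  have hgrowth := integral_mul_le_sub_of_mul_le_deriv (c := β * δ) hab
    (fun x hx => ((hV x hx).const_mul β).exp) fun x hx => by
      have hβδ := mul_le_mul_of_nonneg_left (hδ x hx) hβ
      nlinarith [exp_pos (β * V x)]
  linarith [exp_pos (β * V a)]

theorem integral_exp_mul_le_of_le {V : ℝ → ℝ} {a b β C : ℝ} (hβ : 0 ≤ β) (hab : a ≤ b)
    (hV : ∀ x ∈ Ioc a b, V x ≤ C) :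
    ∫ x in a..b, exp (β * V x) ≤ (b - a) * exp (β * C) := by
  have hnorm := norm_integral_le_of_norm_le_const (a := a) (b := b)
    (f := fun x => exp (β * V x)) fun x hx => by
      rw [uIoc_of_le hab] at hx
      rw [norm_of_nonneg (exp_pos _).le]
      exact exp_le_exp.mpr (mul_le_mul_of_nonneg_left (hV x hx) hβ)
  rw [abs_of_nonneg (sub_nonneg.mpr hab), mul_comm] at hnorm
  exact (le_abs_self _).trans hnorm

theorem integral_exp_mul_le {V V' : ℝ → ℝ} {a x K C β δ : ℝ} (hK : 0 ≤ K) (hβ : 0 < β)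
    (hδ : 0 < δ) (hbd : ∀ u ∈ Icc a (a + K), V u ≤ C)
    (hder : ∀ u ∈ Ici (a + K), HasDerivAt V (V' u) u) (hV' : ∀ u ∈ Ici (a + K), δ ≤ V' u)
    (hx : a ≤ x) (hint : IntervalIntegrable (fun u => exp (β * V u)) volume a x) :
    ∫ u in a..x, exp (β * V u) ≤ K * exp (β * C) + exp (β * V x) / (β * δ) := by
  have htail_nonneg : 0 ≤ exp (β * V x) / (β * δ) := by positivity
  rcases le_or_gt x (a + K) with hxK | hKx
  · have hhead := integral_exp_mul_le_of_le hβ.le hx fun u hu => hbd u ⟨hu.1.le, hu.2.trans hxK⟩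
    nlinarith [exp_pos (β * C)]
  have hhead := integral_exp_mul_le_of_le hβ.le (le_add_of_nonneg_right hK)
    fun u hu => hbd u (Ioc_subset_Icc_self hu)
  have htail := mul_integral_exp_mul_le_of_le_deriv hβ.le hKx.le
    (fun u hu => hder u hu.1) fun u hu => hV' u (le_of_lt hu.1)
  rw [← le_div_iff₀' (by positivity)] at htail
  have hsplit : a + K ∈ uIcc a x := by
    rw [uIcc_of_le hx]; exact ⟨le_add_of_nonneg_right hK, hKx.le⟩
  rw [← integral_add_adjacent_intervals
    (hint.mono_set (uIcc_subset_uIcc left_mem_uIcc hsplit))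
    (hint.mono_set (uIcc_subset_uIcc hsplit right_mem_uIcc))]
  simp only [add_sub_cancel_left] at hhead
  linarith

theorem stmt14_general (q m K C δ : ℝ) (hq : 2 ≤ q) (hK : 0 < K) (hδ : 0 < δ)
    (V V' : ℝ → ℝ)
    (hbd : ∀ x ∈ Set.Icc m (m + K), |V x| ≤ C)
    (hder : ∀ x ∈ Set.Ici (m + K), HasDerivAt V (V' x) x)
    (hV' : ∀ x ∈ Set.Ici (m + K), δ ≤ V' x)
    (hlow : ∀ x ∈ Set.Ici m, -C ≤ V x) :
    ∀ x ≥ m,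
      (1 / (1 / δ + (K / (q - 1)) * Real.exp (2 * C / (q - 1)))) *
          (∫ u in m..x, Real.exp (-V u) ^ (-(1 / (q - 1))))
        ≤ (q - 1) * Real.exp (-V x) ^ (-(1 / (q - 1))) := by
  intro x hx
  have hq1 : 0 < q - 1 := by linarith
  set β := 1 / (q - 1) with hβ_def
  have hF : ∀ u, exp (-V u) ^ (-β) = exp (β * V u) := fun u => by rw [← exp_mul]; ring_nf
  simp only [hF]
  by_cases hint : IntervalIntegrable (fun u => exp (β * V u)) volume m x
  swap
  · -- junk value: a non-integrable interval integral is `0`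
    rw [integral_undef hint, mul_zero]; positivity
  have hmain := integral_exp_mul_le hK.le (by positivity) hδ
    (fun u hu => (le_abs_self _).trans (hbd u hu)) hder hV' hx hint
  have hexp_C : exp (β * C) ≤ exp (2 * C / (q - 1)) * exp (β * V x) := by
    rw [← exp_add]
    gcongr
    have hVx := hlow x hx
    rw [hβ_def]
    field_simp
    linarith
  have hβδ : exp (β * V x) / (β * δ) = (q - 1) / δ * exp (β * V x) := by
    rw [hβ_def]; field_simp
  rw [one_div_mul_eq_div, div_le_iff₀ (by positivity)]
  calc ∫ u in m..x, exp (β * V u)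
      ≤ K * (exp (2 * C / (q - 1)) * exp (β * V x)) + (q - 1) / δ * exp (β * V x) := by
        rw [← hβδ]
        exact hmain.trans (by gcongr)
    _ = (q - 1) * exp (β * V x) * (1 / δ + K / (q - 1) * exp (2 * C / (q - 1))) := by
        field_simp
        ring

/-- For `q ≥ 2` and `n = e^{−V}` on `[m,∞)` with `|V| ≤ C` on `[m,m+K]`,
`V` C¹ on `[m+K,∞)` with `V' ≥ δ > 0` there, and `V ≥ −C` on `[m,∞)`, one has for `x ≥ m`:
`(q−1)·n(x)^{−1/(q−1)} ≥ ε·∫_m^x n(u)^{−1/(q−1)} du` with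
`ε = 1/(1/δ + (K/(q−1))·e^{2C/(q−1)})`. -/
theorem stmt14 (q m K C δ : ℝ) (hq : 2 ≤ q) (hK : 0 < K) (hδ : 0 < δ)
    (V V' : ℝ → ℝ) (hVmeas : Measurable V)
    (hbd : ∀ x ∈ Set.Icc m (m + K), |V x| ≤ C)
    (hder : ∀ x ∈ Set.Ici (m + K), HasDerivAt V (V' x) x)
    (hcont : ContinuousOn V' (Set.Ici (m + K)))
    (hV' : ∀ x ∈ Set.Ici (m + K), δ ≤ V' x)
    (hlow : ∀ x ∈ Set.Ici m, -C ≤ V x) :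
    ∀ x ≥ m,
      (1 / (1 / δ + (K / (q - 1)) * Real.exp (2 * C / (q - 1)))) *
          (∫ u in m..x, Real.exp (-V u) ^ (-(1 / (q - 1))))
        ≤ (q - 1) * Real.exp (-V x) ^ (-(1 / (q - 1))) :=
  stmt14_general q m K C δ hq hK hδ V V' hbd hder hV' hlow
end

section
/- Let Ψ : [a,∞) → ℝ be C² in a neighborhood of +∞ with liminf_{x→∞} Ψ'(x) > 0, and suppose there exist ε, A > 0 and x₀ such that for x ≥ x₀: −1+ε ≤ Ψ''(x)/Ψ'(x)² ≤ A. Then for all x ≥ x₀: (1/(1+A))·e^{−Ψ(x)}/Ψ'(x) ≤ ∫_x^∞ e^{−Ψ(t)} dt ≤ (1/ε)·e^{−Ψ(x)}/Ψ'(x). -/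
/-!
Put `G = e^{-Ψ}/Ψ'`. Then `-G' = e^{-Ψ} (1 + Ψ''/Ψ'²)`, and the hypothesis on `Ψ''/Ψ'²` squeezes
this between `ε e^{-Ψ}` and `(1 + A) e^{-Ψ}`. Comparing `∫_x^y e^{-Ψ}` with `G x - G y` and letting
`y → ∞` gives both bounds: the upper one because `G ≥ 0`, the lower one because `G y → 0`, which
holds since `Ψ'` is eventually bounded below by a positive constant, so `Ψ` grows at least linearly.
-/

open Real Set Filter MeasureTheory Topology

section ComparisonWithDerivative

variable {g G G' : ℝ → ℝ} {x : ℝ}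

theorem intervalIntegral_le_sub_of_le_neg_deriv {y : ℝ} (hxy : x ≤ y)
    (hG : ∀ t ∈ Icc x y, HasDerivAt G (G' t) t) (hg : IntegrableOn g (Icc x y))
    (hgG : ∀ t ∈ Ioo x y, g t ≤ -G' t) :
    ∫ t in x..y, g t ≤ G x - G y := by
  have := intervalIntegral.integral_le_sub_of_hasDeriv_right_of_le hxy
    (fun t ht => (hG t ht).continuousAt.continuousWithinAt.neg)
    (fun t ht => (hG t (Ioo_subset_Icc_self ht)).neg.hasDerivWithinAt) hg hgG
  simp only [Pi.neg_apply] at this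
  linarith

theorem sub_le_intervalIntegral_of_neg_deriv_le {y : ℝ} (hxy : x ≤ y)
    (hG : ∀ t ∈ Icc x y, HasDerivAt G (G' t) t) (hg : IntegrableOn g (Icc x y))
    (hgG : ∀ t ∈ Ioo x y, -G' t ≤ g t) :
    G x - G y ≤ ∫ t in x..y, g t := by
  have := intervalIntegral.sub_le_integral_of_hasDeriv_right_of_le hxy
    (fun t ht => (hG t ht).continuousAt.continuousWithinAt.neg)
    (fun t ht => (hG t (Ioo_subset_Icc_self ht)).neg.hasDerivWithinAt) hg hgG
  simp only [Pi.neg_apply] at this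
  linarith

theorem integrableOn_Ioi_and_integral_le_of_le_neg_deriv (hG : ∀ t ≥ x, HasDerivAt G (G' t) t)
    (hG_nonneg : ∀ t ≥ x, 0 ≤ G t) (hg : ContinuousOn g (Ici x)) (hg_nonneg : ∀ t ≥ x, 0 ≤ g t)
    (hgG : ∀ t ≥ x, g t ≤ -G' t) :
    IntegrableOn g (Ioi x) ∧ ∫ t in Ioi x, g t ≤ G x := by
  have hIcc : ∀ y, IntegrableOn g (Icc x y) := fun y =>
    (hg.mono fun t ht => ht.1).integrableOn_Icc
  have hbound : ∀ y ≥ x, ∫ t in x..y, g t ≤ G x := fun y hxy => by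
    have := intervalIntegral_le_sub_of_le_neg_deriv hxy (fun t ht => hG t ht.1) (hIcc y)
      (fun t ht => hgG t ht.1.le)
    linarith [hG_nonneg y hxy]
  have hint : IntegrableOn g (Ioi x) := by
    refine integrableOn_Ioi_of_intervalIntegral_norm_bounded (G x) x
      (fun y => (hIcc y).mono_set Ioc_subset_Icc_self) tendsto_id ?_
    filter_upwards [eventually_ge_atTop x] with y hxy
    rw [intervalIntegral.integral_congr fun t ht =>
      Real.norm_of_nonneg (hg_nonneg t (by rw [uIcc_of_le hxy] at ht; exact ht.1))]
    exact hbound y hxy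
  refine ⟨hint, le_of_tendsto (intervalIntegral_tendsto_integral_Ioi x hint tendsto_id) ?_⟩
  filter_upwards [eventually_ge_atTop x] with y hxy using hbound y hxy

theorem le_integral_Ioi_of_neg_deriv_le (hG : ∀ t ≥ x, HasDerivAt G (G' t) t)
    (hG_lim : Tendsto G atTop (𝓝 0)) (hg : IntegrableOn g (Ioi x))
    (hgG : ∀ t ≥ x, -G' t ≤ g t) :
    G x ≤ ∫ t in Ioi x, g t := by
  have hlim : Tendsto (fun y => G x - G y) atTop (𝓝 (G x - 0)) :=
    tendsto_const_nhds.sub hG_lim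
  rw [sub_zero] at hlim
  refine le_of_tendsto_of_tendsto hlim (intervalIntegral_tendsto_integral_Ioi x hg tendsto_id) ?_
  filter_upwards [eventually_ge_atTop x] with y hxy
  refine sub_le_intervalIntegral_of_neg_deriv_le hxy (fun t ht => hG t ht.1) ?_
    (fun t ht => hgG t ht.1.le)
  exact ((integrableOn_Icc_iff_integrableOn_Ioc).mpr (hg.mono_set Ioc_subset_Ioi_self))

end ComparisonWithDerivative

theorem tendsto_atTop_of_hasDerivAt_of_pos_le {f f' : ℝ → ℝ} {c x₀ : ℝ} (hc : 0 < c)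
    (hf : ∀ t ≥ x₀, HasDerivAt f (f' t) t) (hf' : ∀ t ≥ x₀, c ≤ f' t) :
    Tendsto f atTop atTop := by
  have hlin : ∀ t ≥ x₀, c * (t - x₀) ≤ f t - f x₀ :=
    fun t ht => (convex_Ici x₀).mul_sub_le_image_sub_of_le_deriv
      (fun s hs => (hf s hs).continuousAt.continuousWithinAt)
      (fun s hs => (hf s (interior_subset hs)).differentiableAt.differentiableWithinAt)
      (fun s hs => (hf s (interior_subset hs)).deriv ▸ hf' s (interior_subset hs))
      x₀ self_mem_Ici t ht ht
  have hlin_tendsto : Tendsto (fun t => c * (t - x₀) + f x₀) atTop atTop :=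
    tendsto_atTop_add_const_right _ _
      ((tendsto_atTop_add_const_right _ (-x₀) tendsto_id).const_mul_atTop hc)
  refine tendsto_atTop_mono' atTop ?_ hlin_tendsto
  filter_upwards [eventually_ge_atTop x₀] with t ht
  linarith [hlin t ht]

theorem hasDerivAt_exp_neg_div {Ψ Ψ' : ℝ → ℝ} {t ψ'' : ℝ} (hΨ : HasDerivAt Ψ (Ψ' t) t)
    (hΨ' : HasDerivAt Ψ' ψ'' t) (hne : Ψ' t ≠ 0) :
    HasDerivAt (fun s => exp (-Ψ s) / Ψ' s) (-(exp (-Ψ t) * (1 + ψ'' / Ψ' t ^ 2))) t := by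
  refine (hΨ.fun_neg.exp.fun_div hΨ' hne).congr_deriv ?_
  field_simp
  ring

theorem tendsto_exp_neg_div_atTop_nhds_zero {Ψ Ψ' : ℝ → ℝ} {c : ℝ} (hc : 0 < c)
    (hΨ : ∀ᶠ t in atTop, HasDerivAt Ψ (Ψ' t) t) (hΨ' : ∀ᶠ t in atTop, c ≤ Ψ' t) :
    Tendsto (fun t => exp (-Ψ t) / Ψ' t) atTop (𝓝 0) := by
  obtain ⟨X, hX⟩ := (hΨ.and hΨ').exists_forall_of_atTop
  have hΨ_tendsto : Tendsto Ψ atTop atTop :=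
    tendsto_atTop_of_hasDerivAt_of_pos_le hc (fun t ht => (hX t ht).1) (fun t ht => (hX t ht).2)
  have hupper : Tendsto (fun t => exp (-Ψ t) / c) atTop (𝓝 0) := by
    simpa using (tendsto_exp_neg_atTop_nhds_zero.comp hΨ_tendsto).div_const c
  refine tendsto_of_tendsto_of_tendsto_of_le_of_le' tendsto_const_nhds hupper ?_ ?_
  · filter_upwards [hΨ'] with t ht using div_nonneg (exp_pos _).le (hc.trans_le ht).le
  · filter_upwards [hΨ'] with t ht using div_le_div_of_nonneg_left (exp_pos _).le hc ht

theorem stmt19_general (Ψ Ψ' Ψ'' : ℝ → ℝ) (x₀ ε A : ℝ)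
    (hε : 0 < ε) (hA : 0 < A)
    (hd1 : ∀ x ≥ x₀, HasDerivAt Ψ (Ψ' x) x)
    (hd2 : ∀ x ≥ x₀, HasDerivAt Ψ' (Ψ'' x) x)
    (hliminf : 0 < Filter.liminf Ψ' Filter.atTop)
    (hpos : ∀ x ≥ x₀, 0 < Ψ' x)
    (hratio : ∀ x ≥ x₀, -1 + ε ≤ Ψ'' x / (Ψ' x) ^ 2 ∧ Ψ'' x / (Ψ' x) ^ 2 ≤ A) :
    ∀ x ≥ x₀,
      (1 / (1 + A)) * (Real.exp (-Ψ x) / Ψ' x) ≤ (∫ t in Set.Ioi x, Real.exp (-Ψ t)) ∧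
      (∫ t in Set.Ioi x, Real.exp (-Ψ t)) ≤ (1 / ε) * (Real.exp (-Ψ x) / Ψ' x) := by
  have hG_lim : Tendsto (fun t => exp (-Ψ t) / Ψ' t) atTop (𝓝 0) := by
    have hbdd : IsBoundedUnder (· ≥ ·) atTop Ψ' :=
      isBoundedUnder_of_eventually_ge (eventually_atTop.2 ⟨x₀, fun t ht => (hpos t ht).le⟩)
    have hΨ'_ge := eventually_lt_of_lt_liminf (half_lt_self hliminf) hbdd
    exact tendsto_exp_neg_div_atTop_nhds_zero (half_pos hliminf)
      (eventually_atTop.2 ⟨x₀, hd1⟩) (hΨ'_ge.mono fun t ht => ht.le)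
  intro x hx
  have hG : ∀ t ≥ x, HasDerivAt (fun s => exp (-Ψ s) / Ψ' s)
      (-(exp (-Ψ t) * (1 + Ψ'' t / Ψ' t ^ 2))) t := fun t ht =>
    hasDerivAt_exp_neg_div (hd1 t (hx.trans ht)) (hd2 t (hx.trans ht)) (hpos t (hx.trans ht)).ne'
  have hexp_cont : ContinuousOn (fun t => exp (-Ψ t)) (Ici x) := fun t ht =>
    (hd1 t (hx.trans ht)).continuousAt.neg.rexp.continuousWithinAt
  obtain ⟨hint, hupper⟩ := integrableOn_Ioi_and_integral_le_of_le_neg_deriv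
    (fun t ht => (hG t ht).const_mul (1 / ε))
    (fun t ht => by have hΨ'_pos := hpos t (hx.trans ht); positivity) hexp_cont
    (fun t _ => (exp_pos _).le) fun t ht => by
      have hratio_ge := (hratio t (hx.trans ht)).1
      rw [neg_mul_eq_mul_neg, neg_neg, one_div_mul_eq_div, le_div_iff₀ hε]
      nlinarith [exp_pos (-Ψ t)]
  refine ⟨le_integral_Ioi_of_neg_deriv_le (fun t ht => (hG t ht).const_mul (1 / (1 + A)))
    (by simpa using hG_lim.const_mul (1 / (1 + A))) hint fun t ht => ?_, hupper⟩
  have hratio_le := (hratio t (hx.trans ht)).2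
  rw [neg_mul_eq_mul_neg, neg_neg, one_div_mul_eq_div, div_le_iff₀ (by linarith)]
  nlinarith [exp_pos (-Ψ t)]

/-- If `Ψ` is C² on `[x₀,∞)` with `liminf_{x→∞} Ψ'(x) > 0`, `Ψ' > 0` on
`[x₀,∞)` and `−1+ε ≤ Ψ''/Ψ'² ≤ A` on `[x₀,∞)` (`ε, A > 0`), then for all `x ≥ x₀`:
`(1/(1+A))·e^{−Ψ(x)}/Ψ'(x) ≤ ∫_x^∞ e^{−Ψ(t)} dt ≤ (1/ε)·e^{−Ψ(x)}/Ψ'(x)`. -/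
theorem stmt19 (Ψ Ψ' Ψ'' : ℝ → ℝ) (a x₀ ε A : ℝ)
    (hax : a ≤ x₀) (hε : 0 < ε) (hA : 0 < A)
    (hd1 : ∀ x ≥ x₀, HasDerivAt Ψ (Ψ' x) x)
    (hd2 : ∀ x ≥ x₀, HasDerivAt Ψ' (Ψ'' x) x)
    (hcont : ContinuousOn Ψ'' (Set.Ici x₀))
    (hliminf : 0 < Filter.liminf Ψ' Filter.atTop)
    (hpos : ∀ x ≥ x₀, 0 < Ψ' x)
    (hratio : ∀ x ≥ x₀, -1 + ε ≤ Ψ'' x / (Ψ' x) ^ 2 ∧ Ψ'' x / (Ψ' x) ^ 2 ≤ A) :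
    ∀ x ≥ x₀,
      (1 / (1 + A)) * (Real.exp (-Ψ x) / Ψ' x) ≤ (∫ t in Set.Ioi x, Real.exp (-Ψ t)) ∧
      (∫ t in Set.Ioi x, Real.exp (-Ψ t)) ≤ (1 / ε) * (Real.exp (-Ψ x) / Ψ' x) :=
  stmt19_general Ψ Ψ' Ψ'' x₀ ε A hε hA hd1 hd2 hliminf hpos hratio
end
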